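/- In the Fabrykowski–Gupta group Γ ≤ Aut(T_3) generated by a (cyclic rotation of the top three branches) and t (recursively defined by φ(t) = (a, 1, t)), the subgroup K = ⟨at, ta⟩ is a normal subgroup of index 3, and K is torsion-free; hence Γ is virtually torsion-free. -/

import Mathlib

/-- The three-letter alphabet `{0, 1, 2}` of the ternary tree. -/
inductive Three : Type
  | zero : Three
  | one : Three
  | two : Three
deriving DecidableEq, Repr

instance : Fintype Three :=
  ⟨{Three.zero, Three.one, Three.two}, by intro x; cases x <;> decide⟩

/-- The cyclic rotation `s ↦ s + 1` of the alphabet. -/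
def rot : Three → Three
  | .zero => .one
  | .one => .two
  | .two => .zero

/-- The inverse rotation `s ↦ s - 1`. -/
def rotInv : Three → Three
  | .zero => .two
  | .one => .zero
  | .two => .one

/-- The rooted automorphism `a` of the ternary tree: cyclic rotation of the first letter. -/
def raFun : List Three → List Three
  | [] => []
  | s :: t => rot s :: t

def raInvFun : List Three → List Three
  | [] => []
  | s :: t => rotInv s :: t

mutual
  /-- The generator `t` of the Fabrykowski–Gupta group: `φ(t) = (a, 1, t)`. -/
  def rtFun : List Three → List Three
    | [] => []
    | .zero :: r => .zero :: raFun r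
    | .one :: r => .one :: r
    | .two :: r => .two :: rtFun r
  def rtInvFun : List Three → List Three
    | [] => []
    | .zero :: r => .zero :: raInvFun r
    | .one :: r => .one :: r
    | .two :: r => .two :: rtInvFun r
end

theorem ra_left_inv : ∀ l, raInvFun (raFun l) = l := by
  intro l; cases l with
  | nil => rfl
  | cons s r => cases s <;> rfl

theorem ra_right_inv : ∀ l, raFun (raInvFun l) = l := by
  intro l; cases l with
  | nil => rfl
  | cons s r => cases s <;> rfl

theorem rt_left_inv : ∀ l, rtInvFun (rtFun l) = l := by
  intro l
  induction l with
  | nil => rfl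
  | cons s r ih => cases s <;> simp [rtFun, rtInvFun, ra_left_inv r, ih]

theorem rt_right_inv : ∀ l, rtFun (rtInvFun l) = l := by
  intro l
  induction l with
  | nil => rfl
  | cons s r ih => cases s <;> simp [rtFun, rtInvFun, ra_right_inv r, ih]

/-- The generator `a` as a tree automorphism. -/
def ra : Equiv.Perm (List Three) :=
  { toFun := raFun, invFun := raInvFun, left_inv := ra_left_inv, right_inv := ra_right_inv }

/-- The generator `t` as a tree automorphism. -/
def rt : Equiv.Perm (List Three) :=
  { toFun := rtFun, invFun := rtInvFun, left_inv := rt_left_inv, right_inv := rt_right_inv }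

/-- The Fabrykowski–Gupta group `Γ = ⟨a, t⟩`. -/
def fgGamma : Subgroup (Equiv.Perm (List Three)) := Subgroup.closure {ra, rt}

/-- The subgroup `K = ⟨at, ta⟩` of `Γ`. -/
def fgK : Subgroup (Equiv.Perm (List Three)) := Subgroup.closure {ra * rt, rt * ra}


/-!
Every element of `Γ` acts at each vertex by a power of the rotation. On the group of such
automorphisms, `χ g = e_∅(g) - ∑ₛ e_s(g)`, built from the rotation exponents of `g` at the root and
on the first level, is a homomorphism to `ℤ/3` with `χ a = 1` and `χ t = -1`; hence `K = Γ ∩ ker χ`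
is normal of index `3`.

Torsion in this group is `3`-torsion, so it suffices to show that `g ∈ K` with `g³ = 1` is trivial.
If `g` moved the first level, `g³ = 1` would force `∑ₛ e_s(g) = 0`, so `χ g ≠ 0`. Hence `g` is a
product of the conjugates `c_k = a^k t a^{-k}`, and its sections satisfy
`χ(g|_s) = e_s(g) - e_{s+1}(g)`; with `g³ = 1` this makes every `e_s(g)` and every `χ(g|_s)` vanish.
Each section is written with fewer letters `t` than `g`, unless all the `c_k` coincide and `g` is a
power of a single `c_k`, which has order `3`. Induction on the number of letters `t` concludes.
-/

open Equiv

namespace Three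

def toZMod : Three → ZMod 3
  | zero => 0
  | one => 1
  | two => 2

def ofZMod (e : ZMod 3) : Three := if e = 0 then zero else if e = 1 then one else two

end Three

def rotBy (e : ZMod 3) (s : Three) : Three := Three.ofZMod (s.toZMod + e)

@[simp] lemma rotBy_zero (s : Three) : rotBy 0 s = s := by revert s; decide

lemma rotBy_rotBy (e f : ZMod 3) (s : Three) : rotBy e (rotBy f s) = rotBy (f + e) s := by
  revert e f s; decide

lemma rotBy_one (s : Three) : rotBy 1 s = rot s := by revert s; decide

lemma rotBy_rot (e : ZMod 3) (s : Three) : rotBy e (rot s) = rot (rotBy e s) := by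
  revert e s; decide

lemma toZMod_rotBy_zero (e : ZMod 3) : (rotBy e .zero).toZMod = e := by revert e; decide

lemma rotBy_eq_two_iff (e : ZMod 3) (s : Three) : rotBy (-e) s = .two ↔ e = s.toZMod + 1 := by
  revert e s; decide

lemma sum_three {M : Type*} [AddCommMonoid M] (f : Three → M) :
    ∑ s, f s = f .zero + f .one + f .two := by
  simp [Finset.univ, Fintype.elems, add_assoc]

lemma orbit_sum_eq_sum {M : Type*} [AddCommMonoid M] (f : Three → M) {c : ZMod 3} (hc : c ≠ 0) :
    f (rotBy c (rotBy c .zero)) + f (rotBy c .zero) + f .zero = ∑ s, f s := by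
  obtain rfl | rfl : c = 1 ∨ c = 2 := by revert c; decide
  · rw [sum_three, show rotBy 1 (rotBy 1 .zero) = .two by decide,
      show rotBy 1 .zero = .one by decide]
    abel
  · rw [sum_three, show rotBy 2 (rotBy 2 .zero) = .one by decide,
      show rotBy 2 .zero = .two by decide]
    abel

lemma sum_comp_rotBy {M : Type*} [AddCommMonoid M] (f : Three → M) (e : ZMod 3) :
    ∑ s, f (rotBy e s) = ∑ s, f s :=
  Fintype.sum_bijective _ (Function.bijective_iff_has_inverse.mpr
    ⟨rotBy (-e), fun s => by simp [rotBy_rotBy], fun s => by simp [rotBy_rotBy]⟩) _ _ fun _ => rfl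

def rootRot (e : ZMod 3) : Perm (List Three) where
  toFun
    | [] => []
    | s :: r => rotBy e s :: r
  invFun
    | [] => []
    | s :: r => rotBy (-e) s :: r
  left_inv := by rintro (_ | ⟨s, r⟩) <;> simp [rotBy_rotBy]
  right_inv := by rintro (_ | ⟨s, r⟩) <;> simp [rotBy_rotBy]

@[simp] lemma rootRot_nil (e : ZMod 3) : rootRot e [] = [] := rfl

@[simp] lemma rootRot_cons (e : ZMod 3) (s : Three) (r : List Three) :
    rootRot e (s :: r) = rotBy e s :: r := rfl

lemma rootRot_add (e f : ZMod 3) : rootRot (e + f) = rootRot e * rootRot f := by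
  ext (_ | ⟨s, r⟩) <;> simp [rotBy_rotBy, add_comm]

@[simp] lemma rootRot_zero : rootRot 0 = 1 := by
  ext (_ | ⟨s, r⟩) <;> simp

lemma rootRot_neg (e : ZMod 3) : rootRot (-e) = (rootRot e)⁻¹ :=
  eq_inv_of_mul_eq_one_left (by rw [← rootRot_add, neg_add_cancel, rootRot_zero])

lemma ra_eq_rootRot_one : ra = rootRot 1 := by
  ext (_ | ⟨s, r⟩)
  · rfl
  · simp [ra, raFun, rotBy_one]

lemma rootRot_natCast (n : ℕ) : rootRot n = ra ^ n := by
  induction n with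
  | zero => simp
  | succ n ih => rw [Nat.cast_succ, rootRot_add, ih, pow_succ, ra_eq_rootRot_one]

lemma ra_mem_fgGamma : ra ∈ fgGamma := Subgroup.subset_closure (by simp)

lemma rt_mem_fgGamma : rt ∈ fgGamma := Subgroup.subset_closure (by simp)

lemma rootRot_mem_fgGamma (e : ZMod 3) : rootRot e ∈ fgGamma := by
  rw [← ZMod.natCast_zmod_val e, rootRot_natCast]
  exact pow_mem ra_mem_fgGamma _

lemma rt_pow_three : rt ^ 3 = 1 := by
  ext l : 1
  simp only [pow_succ, pow_zero, one_mul, Perm.mul_apply, Perm.one_apply]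
  induction l with
  | nil => rfl
  | cons s r ih =>
    cases s with
    | zero => cases r with
      | nil => rfl
      | cons s r => cases s <;> rfl
    | one => rfl
    | two => exact congrArg (Three.two :: ·) ih

lemma ra_inv : ra⁻¹ = ra * ra := by
  rw [ra_eq_rootRot_one, ← rootRot_neg, ← rootRot_add]; rfl

lemma rt_inv : rt⁻¹ = rt * rt := inv_eq_of_mul_eq_one_right (by rw [← pow_three, rt_pow_three])

-- The exponent `e` with `g (l ++ [s]) = g l ++ [rotBy e s]` for all `s`, read off at `s = 0`.
def localExp (g : Perm (List Three)) (l : List Three) : ZMod 3 :=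
  ((g (l ++ [.zero])).getLastD .zero).toZMod

lemma localExp_eq_of_apply {g : Perm (List Three)} {l u : List Three} {e : ZMod 3}
    (h : g (l ++ [.zero]) = u ++ [rotBy e .zero]) : localExp g l = e := by
  rw [localExp, h, List.getLastD_concat, toZMod_rotBy_zero]

-- The automorphisms acting below every vertex by a power of the rotation, i.e. the Sylow pro-`3`
-- subgroup of `Aut T₃`.
def rotAut : Subgroup (Perm (List Three)) where
  carrier := {g | g [] = [] ∧ ∀ l, ∃ e, ∀ s, g (l ++ [s]) = g l ++ [rotBy e s]}
  one_mem' := ⟨rfl, fun _ => ⟨0, by simp⟩⟩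
  mul_mem' := by
    rintro g h ⟨hg₀, hg⟩ ⟨hh₀, hh⟩
    refine ⟨by simp [hh₀, hg₀], fun l => ?_⟩
    obtain ⟨f, hf⟩ := hh l
    obtain ⟨e, he⟩ := hg (h l)
    exact ⟨f + e, fun s => by simp [hf, he, rotBy_rotBy]⟩
  inv_mem' := by
    rintro g ⟨hg₀, hg⟩
    refine ⟨Perm.inv_eq_iff_eq.mpr hg₀.symm, fun l => ?_⟩
    obtain ⟨e, he⟩ := hg (g⁻¹ l)
    refine ⟨-e, fun s => Perm.inv_eq_iff_eq.mpr ?_⟩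
    rw [he]; simp [rotBy_rotBy]

variable {g h : Perm (List Three)}

lemma apply_append_singleton (hg : g ∈ rotAut) (l : List Three) (s : Three) :
    g (l ++ [s]) = g l ++ [rotBy (localExp g l) s] := by
  obtain ⟨e, he⟩ := hg.2 l
  rw [localExp_eq_of_apply (he .zero)]
  exact he s

lemma apply_nil (hg : g ∈ rotAut) : g [] = [] := hg.1

lemma apply_singleton (hg : g ∈ rotAut) (s : Three) : g [s] = [rotBy (localExp g []) s] := by
  simpa [apply_nil hg] using apply_append_singleton hg [] s

lemma exists_apply_append (hg : g ∈ rotAut) (l m : List Three) : ∃ u, g (l ++ m) = g l ++ u := by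
  induction m using List.reverseRecOn with
  | nil => exact ⟨[], by simp⟩
  | append_singleton m s ih =>
    obtain ⟨u, hu⟩ := ih
    exact ⟨u ++ [rotBy (localExp g (l ++ m)) s], by
      rw [← List.append_assoc, apply_append_singleton hg, hu, List.append_assoc]⟩

lemma localExp_mul (hg : g ∈ rotAut) (hh : h ∈ rotAut) (l : List Three) :
    localExp (g * h) l = localExp g (h l) + localExp h l := by
  refine localExp_eq_of_apply (u := g (h l)) ?_
  rw [Perm.mul_apply, apply_append_singleton hh, apply_append_singleton hg, rotBy_rotBy, add_comm]

lemma localExp_one (l : List Three) : localExp 1 l = 0 :=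
  localExp_eq_of_apply (u := l) (by simp)

lemma rootRot_mem_rotAut (e : ZMod 3) : rootRot e ∈ rotAut := by
  refine ⟨rfl, fun l => ?_⟩
  cases l with
  | nil => exact ⟨e, fun s => rfl⟩
  | cons x l => exact ⟨0, fun s => by simp⟩

lemma rt_mem_rotAut : rt ∈ rotAut := by
  refine ⟨rfl, fun l => ?_⟩
  induction l with
  | nil => exact ⟨0, fun s => by cases s <;> rfl⟩
  | cons x l ih =>
    cases x with
    | zero =>
      obtain ⟨e, he⟩ := (rootRot_mem_rotAut 1).2 l
      exact ⟨e, fun s => by simpa [rt, rtFun, ← ra_eq_rootRot_one, ra] using he s⟩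
    | one => exact ⟨0, fun s => by simp [rt, rtFun]⟩
    | two =>
      obtain ⟨e, he⟩ := ih
      exact ⟨e, fun s => by simpa [rt, rtFun] using he s⟩

lemma fgGamma_le_rotAut : fgGamma ≤ rotAut := by
  rw [fgGamma, Subgroup.closure_le]
  rintro g (rfl | rfl)
  · rw [ra_eq_rootRot_one]; exact rootRot_mem_rotAut 1
  · exact rt_mem_rotAut

def chi (g : Perm (List Three)) : ZMod 3 := localExp g [] - ∑ s, localExp g [s]

lemma chi_one : chi 1 = 0 := by simp [chi, localExp_one]

lemma chi_mul (hg : g ∈ rotAut) (hh : h ∈ rotAut) : chi (g * h) = chi g + chi h := by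
  simp only [chi, localExp_mul hg hh, apply_nil hh, apply_singleton hh, Finset.sum_add_distrib,
    sum_comp_rotBy (fun s => localExp g [s])]
  ring

lemma chi_inv (hg : g ∈ rotAut) : chi g⁻¹ = -chi g :=
  eq_neg_of_add_eq_zero_left (by rw [← chi_mul (inv_mem hg) hg, inv_mul_cancel, chi_one])

lemma chi_pow (hg : g ∈ rotAut) (n : ℕ) : chi (g ^ n) = n * chi g := by
  induction n with
  | zero => simp [chi_one]
  | succ n ih => rw [pow_succ, chi_mul (pow_mem hg n) hg, ih]; push_cast; ring

lemma chi_rootRot (e : ZMod 3) : chi (rootRot e) = e := by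
  have h₀ : localExp (rootRot e) [] = e := localExp_eq_of_apply (u := []) rfl
  have h₁ (s : Three) : localExp (rootRot e) [s] = 0 :=
    localExp_eq_of_apply (u := [rotBy e s]) (by simp)
  simp [chi, h₀, h₁]

lemma chi_ra : chi ra = 1 := by rw [ra_eq_rootRot_one, chi_rootRot]

lemma chi_rt : chi rt = -1 := by decide

-- `g` cycles the first level, and the exponent of `g³ = 1` at `[0]` adds up the exponents of `g`
-- along that cycle.
lemma sum_localExp_singleton_eq_zero (hg : g ∈ rotAut) (h3 : g ^ 3 = 1)
    (hc : localExp g [] ≠ 0) : ∑ s, localExp g [s] = 0 := by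
  have h := localExp_mul hg (mul_mem hg hg) [.zero]
  rw [← pow_three, h3, localExp_one, localExp_mul hg hg, Perm.mul_apply,
    apply_singleton hg, apply_singleton hg, rotBy_rotBy] at h
  rw [← orbit_sum_eq_sum (fun s => localExp g [s]) hc, rotBy_rotBy]
  linear_combination -h

lemma chi_eq_localExp_nil (hg : g ∈ rotAut) (h3 : g ^ 3 = 1) (hc : localExp g [] ≠ 0) :
    chi g = localExp g [] := by
  rw [chi, sum_localExp_singleton_eq_zero hg h3 hc, sub_zero]

-- As `a³ = t³ = 1`, the inverses of the generators need no separate case.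
lemma fgGamma_induction {P : ∀ g, g ∈ fgGamma → Prop} (one : P 1 (one_mem _))
    (mul_ra : ∀ g hg, P g hg → P (g * ra) (mul_mem hg ra_mem_fgGamma))
    (mul_rt : ∀ g hg, P g hg → P (g * rt) (mul_mem hg rt_mem_fgGamma))
    (hg : g ∈ fgGamma) : P g hg := by
  induction hg using Subgroup.closure_induction_right with
  | one => exact one
  | mul_right g hg _ hy ih => rcases hy with rfl | rfl; exacts [mul_ra g hg ih, mul_rt g hg ih]
  | mul_inv_cancel g hg _ hy ih =>
    rcases hy with rfl | rfl
    · simpa only [ra_inv, ← mul_assoc] using mul_ra _ _ (mul_ra g hg ih)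
    · simpa only [rt_inv, ← mul_assoc] using mul_rt _ _ (mul_rt g hg ih)

lemma fgK_le_fgGamma : fgK ≤ fgGamma := by
  rw [fgK, Subgroup.closure_le]
  rintro g (rfl | rfl)
  exacts [mul_mem ra_mem_fgGamma rt_mem_fgGamma, mul_mem rt_mem_fgGamma ra_mem_fgGamma]

lemma fgK_le_rotAut : fgK ≤ rotAut := fgK_le_fgGamma.trans fgGamma_le_rotAut

lemma chi_eq_zero_of_mem_fgK (hg : g ∈ fgK) : chi g = 0 := by
  have hra := fgGamma_le_rotAut ra_mem_fgGamma
  have hrt := rt_mem_rotAut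
  induction hg using Subgroup.closure_induction with
  | mem g hg =>
    rcases hg with rfl | rfl
    · rw [chi_mul hra hrt, chi_ra, chi_rt, add_neg_cancel]
    · rw [chi_mul hrt hra, chi_ra, chi_rt, neg_add_cancel]
  | one => exact chi_one
  | mul g h hg hh ihg ihh => rw [chi_mul (fgK_le_rotAut hg) (fgK_le_rotAut hh), ihg, ihh, add_zero]
  | inv g hg ih => rw [chi_inv (fgK_le_rotAut hg), ih, neg_zero]

lemma rootRot_mul_rt_mul_rootRot_mem_fgK (e : ZMod 3) : rootRot e * rt * rootRot (1 - e) ∈ fgK := by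
  have hx : ra * rt ∈ fgK := Subgroup.subset_closure (by simp)
  have hy : rt * ra ∈ fgK := Subgroup.subset_closure (by simp)
  obtain rfl | rfl | rfl : e = 0 ∨ e = 1 ∨ e = 2 := by revert e; decide
  · simpa [← ra_eq_rootRot_one] using hy
  · simpa [← ra_eq_rootRot_one] using hx
  · have hrt : rt = (rt * rt)⁻¹ := eq_inv_of_mul_eq_one_left (by rw [← pow_three, rt_pow_three])
    have : rootRot 2 * rt * rootRot (1 - 2) = (rt * ra)⁻¹ * (ra * rt)⁻¹ := by
      rw [show (1 - 2 : ZMod 3) = -1 by decide, show (2 : ZMod 3) = -1 by decide, rootRot_neg,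
        ← ra_eq_rootRot_one]
      conv_lhs => rw [hrt]
      group
    rw [this]
    exact mul_mem (inv_mem hy) (inv_mem hx)

lemma mul_rootRot_neg_chi_mem_fgK (hg : g ∈ fgGamma) : g * rootRot (-chi g) ∈ fgK := by
  induction hg using fgGamma_induction with
  | one => simp [chi_one]
  | mul_ra g hg ih =>
    rwa [chi_mul (fgGamma_le_rotAut hg) (fgGamma_le_rotAut ra_mem_fgGamma), chi_ra, mul_assoc,
      ra_eq_rootRot_one, ← rootRot_add, show 1 + -(chi g + 1) = -chi g by ring]
  | mul_rt g hg ih =>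
    have h := mul_mem ih (rootRot_mul_rt_mul_rootRot_mem_fgK (chi g))
    rwa [rootRot_neg, ← mul_assoc, ← mul_assoc, inv_mul_cancel_right,
      show 1 - chi g = -(chi g + chi rt) by rw [chi_rt]; ring,
      ← chi_mul (fgGamma_le_rotAut hg) rt_mem_rotAut] at h

lemma mem_fgK_iff (hg : g ∈ fgGamma) : g ∈ fgK ↔ chi g = 0 := by
  refine ⟨chi_eq_zero_of_mem_fgK, fun h => ?_⟩
  simpa [h] using mul_rootRot_neg_chi_mem_fgK hg

def chiHom : fgGamma →* Multiplicative (ZMod 3) :=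
  MonoidHom.mk' (fun g => .ofAdd (chi g))
    fun g h => congrArg _ (chi_mul (fgGamma_le_rotAut g.2) (fgGamma_le_rotAut h.2))

lemma ker_chiHom : chiHom.ker = fgK.subgroupOf fgGamma := by
  ext g
  rw [MonoidHom.mem_ker, Subgroup.mem_subgroupOf, mem_fgK_iff g.2]
  exact ofAdd_eq_one

lemma chiHom_surjective : Function.Surjective chiHom := fun m =>
  ⟨⟨rootRot m.toAdd, rootRot_mem_fgGamma _⟩, by simp [chiHom, chi_rootRot]⟩

lemma fgK_subgroupOf_normal : (fgK.subgroupOf fgGamma).Normal := by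
  rw [← ker_chiHom]; infer_instance

lemma relIndex_fgK : fgK.relIndex fgGamma = 3 := by
  rw [Subgroup.relIndex, ← ker_chiHom, Subgroup.index_ker,
    MonoidHom.range_eq_top_of_surjective _ chiHom_surjective, Subgroup.card_top]
  simp

lemma pow_three_pow_length_apply (hg : g ∈ rotAut) (l : List Three) : (g ^ 3 ^ l.length) l = l := by
  induction l using List.reverseRecOn with
  | nil => exact apply_nil hg
  | append_singleton l s ih =>
    have hstep (s' : Three) : (g ^ 3 ^ l.length) (l ++ [s']) =
        l ++ [rotBy (localExp (g ^ 3 ^ l.length) l) s'] := by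
      rw [apply_append_singleton (pow_mem hg _), ih]
    have hcube (e : ZMod 3) : e + e + e = 0 := by revert e; decide
    rw [List.length_append, List.length_singleton, pow_succ, pow_mul, pow_three]
    simp only [Perm.mul_apply, hstep, rotBy_rotBy, hcube, rotBy_zero]

lemma eq_one_of_pow_eq_one_of_coprime (hg : g ∈ rotAut) {n : ℕ} (hn : n.Coprime 3)
    (h : g ^ n = 1) : g = 1 := by
  ext l : 1
  have hcop : (3 ^ l.length).Coprime (orderOf g) :=
    Nat.Coprime.coprime_dvd_right (orderOf_dvd_of_pow_eq_one h) (hn.symm.pow_left _)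
  obtain ⟨m, hm⟩ := exists_pow_eq_self_of_coprime hcop
  rw [← hm, Perm.one_apply]
  exact Perm.pow_apply_eq_self_of_apply_eq_self (pow_three_pow_length_apply hg l) m

lemma exists_orderOf_pow_eq_three (hg : g ∈ rotAut) (hfin : IsOfFinOrder g) (hne : g ≠ 1) :
    ∃ n, orderOf (g ^ n) = 3 := by
  obtain ⟨p, hp, hpg⟩ := Nat.exists_prime_and_dvd (orderOf_eq_one_iff.not.mpr hne)
  have hord := orderOf_pow_orderOf_div hfin.orderOf_pos.ne' hpg
  refine ⟨orderOf g / p, hord.trans ?_⟩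
  by_contra hp3
  have h1 := eq_one_of_pow_eq_one_of_coprime (pow_mem hg _)
    ((Nat.coprime_primes hp Nat.prime_three).mpr hp3) (hord ▸ pow_orderOf_eq_one _)
  rw [h1, orderOf_one] at hord
  exact hp.one_lt.ne hord

def firstLevelStab : Subgroup (Perm (List Three)) where
  carrier := {g | g ∈ rotAut ∧ ∀ s, g [s] = [s]}
  one_mem' := ⟨one_mem _, fun _ => rfl⟩
  mul_mem' := fun ⟨hg, hg'⟩ ⟨hh, hh'⟩ => ⟨mul_mem hg hh, fun s => by simp [hh', hg']⟩
  inv_mem' := fun ⟨hg, hg'⟩ => ⟨inv_mem hg, fun s => Perm.inv_eq_iff_eq.mpr (hg' s).symm⟩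

lemma localExp_nil_of_mem_firstLevelStab (hg : g ∈ firstLevelStab) : localExp g [] = 0 :=
  localExp_eq_of_apply (u := []) (by simpa using hg.2 .zero)

lemma apply_cons_of_mem_firstLevelStab (hg : g ∈ firstLevelStab) (s : Three) (r : List Three) :
    g (s :: r) = s :: (g (s :: r)).tail := by
  obtain ⟨u, hu⟩ := exists_apply_append hg.1 [s] r
  rw [List.singleton_append] at hu
  rw [hu, hg.2 s]
  rfl

def sectionAt (s : Three) : firstLevelStab →* Perm (List Three) where
  toFun g :=
    { toFun := fun r => ((g : Perm (List Three)) (s :: r)).tail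
      invFun := fun r => ((g : Perm (List Three))⁻¹ (s :: r)).tail
      left_inv := fun r => by
        simp only
        rw [← apply_cons_of_mem_firstLevelStab g.2]
        simp
      right_inv := fun r => by
        simp only
        rw [← apply_cons_of_mem_firstLevelStab (inv_mem g.2)]
        simp }
  map_one' := rfl
  map_mul' g h := by
    refine Equiv.ext fun r => ?_
    simp only [Subgroup.coe_mul, Perm.mul_apply, coe_fn_mk]
    rw [apply_cons_of_mem_firstLevelStab h.2]
    rfl

section

variable (g : firstLevelStab) (s : Three)

lemma sectionAt_apply (r : List Three) :
    sectionAt s g r = ((g : Perm (List Three)) (s :: r)).tail := rfl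

lemma cons_sectionAt_apply (r : List Three) :
    s :: sectionAt s g r = (g : Perm (List Three)) (s :: r) :=
  (apply_cons_of_mem_firstLevelStab g.2 s r).symm

lemma sectionAt_apply_append_singleton (l : List Three) (s' : Three) :
    sectionAt s g (l ++ [s']) = sectionAt s g l ++ [rotBy (localExp g (s :: l)) s'] := by
  have h := apply_append_singleton g.2.1 (s :: l) s'
  rw [← cons_sectionAt_apply, List.cons_append, ← cons_sectionAt_apply] at h
  exact List.cons_injective h

lemma sectionAt_mem_rotAut : sectionAt s g ∈ rotAut :=
  ⟨by simp [sectionAt_apply, g.2.2 s], fun l => ⟨_, sectionAt_apply_append_singleton g s l⟩⟩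

lemma localExp_sectionAt (l : List Three) : localExp (sectionAt s g) l = localExp g (s :: l) :=
  localExp_eq_of_apply (sectionAt_apply_append_singleton g s l .zero)

variable {g s}

lemma eq_one_of_forall_sectionAt_eq_one (h : ∀ s, sectionAt s g = 1) : g = 1 := by
  ext (_ | ⟨s, r⟩) : 2
  · exact apply_nil g.2.1
  · rw [← cons_sectionAt_apply, h s]
    rfl

end

lemma rt_mem_firstLevelStab : rt ∈ firstLevelStab := ⟨rt_mem_rotAut, fun s => by cases s <;> rfl⟩

def rtStab : firstLevelStab := ⟨rt, rt_mem_firstLevelStab⟩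

lemma sectionAt_rtStab_zero : sectionAt .zero rtStab = rootRot 1 := by
  rw [← ra_eq_rootRot_one]; rfl

lemma sectionAt_rtStab_one : sectionAt .one rtStab = 1 := rfl

lemma sectionAt_rtStab_two : sectionAt .two rtStab = rt := rfl

lemma chi_sectionAt_rtStab (s : Three) : chi (sectionAt s rtStab) =
    localExp (sectionAt s rtStab) [] - localExp (sectionAt (rot s) rtStab) [] := by
  cases s <;> decide

def conjT (k : ZMod 3) : firstLevelStab :=
  ⟨rootRot k * rt * rootRot (-k),
    ⟨mul_mem (mul_mem (rootRot_mem_rotAut k) rt_mem_rotAut) (rootRot_mem_rotAut (-k)),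
      fun s => by simp [rt_mem_firstLevelStab.2, rotBy_rotBy]⟩⟩

lemma coe_conjT (k : ZMod 3) : (conjT k : Perm (List Three)) = rootRot k * rt * (rootRot k)⁻¹ := by
  rw [← rootRot_neg]; rfl

lemma conjT_pow_three (k : ZMod 3) : conjT k ^ 3 = 1 := by
  ext1
  rw [Subgroup.coe_pow, coe_conjT, conj_pow, rt_pow_three, mul_one, mul_inv_cancel]
  rfl

lemma chi_conjT (k : ZMod 3) : chi (conjT k) = -1 := by
  rw [coe_conjT, ← rootRot_neg, chi_mul (mul_mem (rootRot_mem_rotAut k) rt_mem_rotAut)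
    (rootRot_mem_rotAut _), chi_mul (rootRot_mem_rotAut k) rt_mem_rotAut, chi_rootRot, chi_rootRot,
    chi_rt]
  ring

lemma sectionAt_conjT (k : ZMod 3) (s : Three) :
    sectionAt s (conjT k) = sectionAt (rotBy (-k) s) rtStab := by
  refine Equiv.ext fun r => ?_
  rw [sectionAt_apply, sectionAt_apply]
  show (rootRot k (rt (rotBy (-k) s :: r))).tail = (rt (rotBy (-k) s :: r)).tail
  rw [apply_cons_of_mem_firstLevelStab rt_mem_firstLevelStab]
  rfl

def conjTProd (M : List (ZMod 3)) : firstLevelStab := (M.map conjT).prod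

lemma conjTProd_cons (k : ZMod 3) (M : List (ZMod 3)) :
    conjTProd (k :: M) = conjT k * conjTProd M := by
  simp [conjTProd]

lemma conjTProd_append_singleton (M : List (ZMod 3)) (k : ZMod 3) :
    conjTProd (M ++ [k]) = conjTProd M * conjT k := by
  simp [conjTProd]

lemma localExp_singleton_mul (g h : firstLevelStab) (s : Three) :
    localExp (g * h : firstLevelStab) [s] = localExp g [s] + localExp h [s] := by
  rw [Subgroup.coe_mul, localExp_mul g.2.1 h.2.1, h.2.2 s]

lemma chi_sectionAt_conjT (k : ZMod 3) (s : Three) :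
    chi (sectionAt s (conjT k)) = localExp (conjT k) [s] - localExp (conjT k) [rot s] := by
  rw [← localExp_sectionAt, ← localExp_sectionAt, sectionAt_conjT, sectionAt_conjT, rotBy_rot]
  exact chi_sectionAt_rtStab _

lemma chi_sectionAt_conjTProd (M : List (ZMod 3)) (s : Three) :
    chi (sectionAt s (conjTProd M)) =
      localExp (conjTProd M) [s] - localExp (conjTProd M) [rot s] := by
  induction M with
  | nil => simp [conjTProd, chi_one, localExp_one]
  | cons k M ih =>
    rw [conjTProd_cons, map_mul, chi_mul (sectionAt_mem_rotAut _ s) (sectionAt_mem_rotAut _ s),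
      localExp_singleton_mul, localExp_singleton_mul, chi_sectionAt_conjT, ih]
    ring

lemma eq_zero_of_sum_eq_zero_of_or {v : Three → ZMod 3} (hsum : ∑ s, v s = 0)
    (hadj : ∀ s, v s = 0 ∨ v (rot s) = 0) (s : Three) : v s = 0 := by
  have key : ∀ a b c : ZMod 3, a + b + c = 0 → a = 0 ∨ b = 0 → b = 0 ∨ c = 0 → c = 0 ∨ a = 0 →
      a = 0 ∧ b = 0 ∧ c = 0 := by decide
  obtain ⟨h₀, h₁, h₂⟩ := key _ _ _ (by rwa [sum_three] at hsum) (hadj .zero) (hadj .one) (hadj .two)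
  cases s <;> assumption

lemma localExp_singleton_conjTProd_eq_zero {M : List (ZMod 3)} (h3 : conjTProd M ^ 3 = 1)
    (hchi : chi (conjTProd M) = 0) (s : Three) : localExp (conjTProd M) [s] = 0 := by
  have hsum : ∑ s, localExp (conjTProd M) [s] = 0 := by
    rwa [chi, localExp_nil_of_mem_firstLevelStab (conjTProd M).2, zero_sub, neg_eq_zero] at hchi
  refine eq_zero_of_sum_eq_zero_of_or hsum (fun s => or_iff_not_imp_left.mpr fun hs => ?_) s
  have h3s : sectionAt s (conjTProd M) ^ 3 = 1 := by rw [← map_pow, h3, map_one]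
  have h := chi_eq_localExp_nil (sectionAt_mem_rotAut _ s) h3s (by rwa [localExp_sectionAt])
  rw [chi_sectionAt_conjTProd, localExp_sectionAt] at h
  linear_combination -h

lemma chi_sectionAt_conjTProd_eq_zero {M : List (ZMod 3)} (h3 : conjTProd M ^ 3 = 1)
    (hchi : chi (conjTProd M) = 0) (s : Three) : chi (sectionAt s (conjTProd M)) = 0 := by
  rw [chi_sectionAt_conjTProd, localExp_singleton_conjTProd_eq_zero h3 hchi,
    localExp_singleton_conjTProd_eq_zero h3 hchi, sub_zero]

lemma conjTProd_replicate_eq_one {n : ℕ} {k : ZMod 3}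
    (hchi : chi (conjTProd (List.replicate n k)) = 0) : conjTProd (List.replicate n k) = 1 := by
  rw [conjTProd, List.map_replicate, List.prod_replicate] at *
  rw [Subgroup.coe_pow, chi_pow (conjT k).2.1, chi_conjT] at hchi
  obtain ⟨m, rfl⟩ := (ZMod.natCast_eq_zero_iff n 3).mp (by linear_combination -hchi)
  rw [pow_mul, conjT_pow_three, one_pow]

-- Products `c_{k₁} ⋯ c_{kₘ} a^e` with `m ≤ n`, where `c_k = a^k t a^{-k}`: the elements of `Γ`
-- written with at most `n` letters `t`.
def tBall (n : ℕ) : Set (Perm (List Three)) :=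
  {g | ∃ M : List (ZMod 3), M.length ≤ n ∧ ∃ e, g = conjTProd M * rootRot e}

lemma one_mem_tBall : (1 : Perm (List Three)) ∈ tBall 0 := ⟨[], le_rfl, 0, by simp [conjTProd]⟩

lemma mul_rootRot_mem_tBall {n : ℕ} (hg : g ∈ tBall n) (f : ZMod 3) : g * rootRot f ∈ tBall n := by
  obtain ⟨M, hM, e, rfl⟩ := hg
  exact ⟨M, hM, e + f, by rw [rootRot_add, mul_assoc]⟩

lemma mul_rt_mem_tBall {n : ℕ} (hg : g ∈ tBall n) : g * rt ∈ tBall (n + 1) := by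
  obtain ⟨M, hM, e, rfl⟩ := hg
  refine ⟨M ++ [e], by simpa using hM, e, ?_⟩
  rw [conjTProd_append_singleton, Subgroup.coe_mul, coe_conjT]
  group

lemma exists_mem_tBall (hg : g ∈ fgGamma) : ∃ n, g ∈ tBall n := by
  induction hg using fgGamma_induction with
  | one => exact ⟨0, one_mem_tBall⟩
  | mul_ra g _ ih =>
    obtain ⟨n, hn⟩ := ih
    exact ⟨n, ra_eq_rootRot_one ▸ mul_rootRot_mem_tBall hn 1⟩
  | mul_rt g _ ih =>
    obtain ⟨n, hn⟩ := ih
    exact ⟨n + 1, mul_rt_mem_tBall hn⟩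

lemma sectionAt_conjTProd_mem_tBall (M : List (ZMod 3)) (s : Three) :
    (sectionAt s (conjTProd M) : Perm (List Three)) ∈ tBall (M.count (s.toZMod + 1)) := by
  induction M using List.reverseRecOn with
  | nil => simpa [conjTProd] using one_mem_tBall
  | append_singleton M k ih =>
    have hcount : (M ++ [k]).count (s.toZMod + 1) =
        M.count (s.toZMod + 1) + if rotBy (-k) s = .two then 1 else 0 := by
      simp [List.count_append, List.count_singleton, rotBy_eq_two_iff]
    rw [conjTProd_append_singleton, map_mul, sectionAt_conjT, hcount]
    cases hu : rotBy (-k) s with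
    | zero => simpa [sectionAt_rtStab_zero] using mul_rootRot_mem_tBall ih 1
    | one => simpa [sectionAt_rtStab_one] using ih
    | two => simpa [sectionAt_rtStab_two] using mul_rt_mem_tBall ih

lemma localExp_conjTProd_mul_rootRot_nil (M : List (ZMod 3)) (e : ZMod 3) :
    localExp (conjTProd M * rootRot e) [] = e := by
  rw [localExp_mul (conjTProd M).2.1 (rootRot_mem_rotAut e), rootRot_nil,
    localExp_nil_of_mem_firstLevelStab (conjTProd M).2, zero_add]
  exact localExp_eq_of_apply (u := []) rfl

theorem eq_one_of_mem_tBall (n : ℕ) : ∀ g ∈ tBall n, g ^ 3 = 1 → chi g = 0 → g = 1 := by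
  induction n using Nat.strong_induction_on with
  | _ n ih =>
  rintro _ ⟨M, hM, e, rfl⟩ h3 hchi
  obtain rfl : e = 0 := by
    by_contra he
    rw [← localExp_conjTProd_mul_rootRot_nil M e] at he
    have := chi_eq_localExp_nil (mul_mem (conjTProd M).2.1 (rootRot_mem_rotAut e)) h3 he
    exact he (this ▸ hchi)
  rw [rootRot_zero, mul_one] at h3 hchi ⊢
  have h3' : conjTProd M ^ 3 = 1 := Subtype.ext (by rwa [Subgroup.coe_pow])
  by_cases hall : ∃ k, M = List.replicate M.length k
  · obtain ⟨k, hk⟩ := hall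
    rw [hk] at hchi ⊢
    rw [conjTProd_replicate_eq_one hchi]
    rfl
  have hlt (s : Three) : M.count (s.toZMod + 1) < n := by
    refine lt_of_lt_of_le (List.count_lt_length_iff.mpr ?_) hM
    by_contra! h
    exact hall ⟨_, List.eq_replicate_iff.mpr ⟨rfl, h⟩⟩
  suffices conjTProd M = 1 by rw [this]; rfl
  exact eq_one_of_forall_sectionAt_eq_one fun s => ih _ (hlt s) _
    (sectionAt_conjTProd_mem_tBall M s) (by rw [← map_pow, h3', map_one])
    (chi_sectionAt_conjTProd_eq_zero h3' hchi s)

theorem fgK_torsion_free : ∀ g ∈ fgK, g ≠ 1 → ¬IsOfFinOrder g := by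
  intro g hg hne hfin
  obtain ⟨n, hn⟩ := exists_orderOf_pow_eq_three (fgK_le_rotAut hg) hfin hne
  obtain ⟨m, hm⟩ := exists_mem_tBall (fgK_le_fgGamma (pow_mem hg n))
  have h1 := eq_one_of_mem_tBall m _ hm (hn ▸ pow_orderOf_eq_one _)
    (chi_eq_zero_of_mem_fgK (pow_mem hg n))
  rw [h1, orderOf_one] at hn
  exact absurd hn (by norm_num)

/-- In the Fabrykowski–Gupta group `Γ = ⟨a, t⟩`, the subgroup `K = ⟨at, ta⟩` is a normal
subgroup of index `3`, and `K` is torsion-free; hence `Γ` is virtually torsion-free. -/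
theorem fabrykowski_gupta_virtually_torsion_free :
    fgK ≤ fgGamma ∧
      (fgK.subgroupOf fgGamma).Normal ∧
      fgK.relIndex fgGamma = 3 ∧
      (∀ g ∈ fgK, g ≠ 1 → ¬ IsOfFinOrder g) ∧
      ∃ H : Subgroup (Equiv.Perm (List Three)), H ≤ fgGamma ∧
        H.relIndex fgGamma ≠ 0 ∧ ∀ g ∈ H, g ≠ 1 → ¬ IsOfFinOrder g :=
  ⟨fgK_le_fgGamma, fgK_subgroupOf_normal, relIndex_fgK, fgK_torsion_free,
    fgK, fgK_le_fgGamma, by rw [relIndex_fgK]; norm_num, fgK_torsion_free⟩
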